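/- arXiv:1502.07597 — 4 statements merged into one kernel-verified Lean document; each statement's English description precedes it below -/
import Mathlib

section
/- In a semimodular lattice of finite length, any two maximal chains between the same pair of elements have the same length (the Jordan–Hölder chain condition). -/
/-- A lattice is (upper) semimodular if `a ⊓ b ⋖ a` implies `b ⋖ a ⊔ b`. -/
def IsSemimodularLattice (α : Type*) [Lattice α] : Prop :=
  ∀ a b : α, a ⊓ b ⋖ a → b ⋖ a ⊔ b

/-- A maximal chain from `x` to `y` of length `m`: a chain
`x = c 0 ⋖ c 1 ⋖ ... ⋖ c m = y`. -/
def IsMaximalChain {α : Type*} [Lattice α] {m : ℕ} (c : Fin (m + 1) → α) (x y : α) : Prop :=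
  c 0 = x ∧ c (Fin.last m) = y ∧ ∀ i : Fin m, c i.castSucc ⋖ c i.succ

/-!
Induct on the length. If two maximal chains `x ⋖ a ⋯ y` and `x ⋖ b ⋯ y` have `a ≠ b`, then
`a ⊓ b = x`, so semimodularity gives `a ⋖ a ⊔ b` and `b ⋖ a ⊔ b`. There is a maximal chain from
`a ⊔ b` to `y`: joining every member of the chain from `a` with `a ⊔ b` makes consecutive members
equal or covering, again by semimodularity. Putting `a`, respectively `b`, in front of it gives a
chain that the induction hypothesis compares with the tail of the first, respectively the second,
chain.
-/

theorem IsSemimodularLattice.isUpperModularLattice {α : Type*} [Lattice α]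
    (h : IsSemimodularLattice α) : IsUpperModularLattice α :=
  ⟨h _ _⟩

theorem CovBy.covBy_sup_of_covBy_of_ne {α : Type*} [Lattice α] [IsUpperModularLattice α]
    {x a b : α} (hxa : x ⋖ a) (hxb : x ⋖ b) (hab : a ≠ b) : a ⋖ a ⊔ b :=
  covBy_sup_of_inf_covBy_right (WCovBy.inf_eq hxa.wcovBy hxb.wcovBy hab ▸ hxb)

abbrev CovBySeries (α : Type*) [Preorder α] := RelSeries {(a, b) : α × α | a ⋖ b}

namespace CovBySeries

variable {α : Type*}

section Preorder

variable [Preorder α]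

theorem head_le_last (p : CovBySeries α) : p.head ≤ p.last :=
  LTSeries.head_le_last (p.ofLE fun _ h ↦ CovBy.lt h)

theorem length_eq_zero_of_head_eq_last {p : CovBySeries α} (h : p.head = p.last) :
    p.length = 0 := by
  cases p using RelSeries.inductionOn with
  | singleton x => rfl
  | cons p x hx =>
    rw [RelSeries.head_cons, RelSeries.last_cons] at h
    exact absurd (h ▸ head_le_last p) (hx : x ⋖ p.head).lt.not_ge

end Preorder

section Lattice

variable [Lattice α] [IsUpperModularLattice α]

theorem exists_head_eq_last_eq (p : CovBySeries α) {z : α} (hpz : p.head ≤ z)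
    (hzp : z ≤ p.last) : ∃ q : CovBySeries α, q.head = z ∧ q.last = p.last := by
  induction p using RelSeries.inductionOn generalizing z with
  | singleton x => exact ⟨RelSeries.singleton _ z, rfl, le_antisymm hzp hpz⟩
  | cons p x hx ih =>
    rw [RelSeries.head_cons] at hpz
    rw [RelSeries.last_cons] at hzp ⊢
    rcases hpz.eq_or_lt with rfl | hxz
    · exact ⟨p.cons x hx, rfl, p.last_cons x hx⟩
    rcases (hx : x ⋖ p.head).eq_or_eq (le_inf hx.le hxz.le) inf_le_left with hinf | hinf
    · obtain ⟨q, hq₀, hq⟩ := ih le_sup_left (sup_le (head_le_last p) hzp)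
      have hz : z ⋖ q.head := hq₀ ▸ covBy_sup_of_inf_covBy_left (hinf ▸ hx)
      exact ⟨q.cons z hz, rfl, (q.last_cons z hz).trans hq⟩
    · exact ih (inf_eq_left.mp hinf) hzp

theorem length_eq_of_head_eq_of_last_eq {p q : CovBySeries α} (hhead : p.head = q.head)
    (hlast : p.last = q.last) : p.length = q.length := by
  induction hn : p.length using Nat.strong_induction_on generalizing p q with
  | _ n ih =>
  subst hn
  cases p using RelSeries.inductionOn with
  | singleton x => exact (length_eq_zero_of_head_eq_last (hhead.symm.trans hlast)).symm
  | cons p x hx =>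
  cases q using RelSeries.inductionOn with
  | singleton y => exact length_eq_zero_of_head_eq_last (hhead.trans hlast.symm)
  | cons q y hy =>
  simp only [RelSeries.head_cons, RelSeries.last_cons, RelSeries.cons_length] at hhead hlast ih ⊢
  subst hhead
  have ih' {s t : CovBySeries α} (hs : s.length ≤ p.length) (h₀ : s.head = t.head)
      (h₁ : s.last = t.last) : s.length = t.length :=
    ih _ (Nat.lt_succ_of_le hs) h₀ h₁ rfl
  rcases eq_or_ne p.head q.head with hab | hab
  · rw [ih' le_rfl hab hlast]
  have ha : p.head ⋖ p.head ⊔ q.head := hx.covBy_sup_of_covBy_of_ne hy hab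
  have hb : q.head ⋖ p.head ⊔ q.head :=
    sup_comm q.head p.head ▸ hy.covBy_sup_of_covBy_of_ne hx hab.symm
  obtain ⟨r, hr₀, hr⟩ := exists_head_eq_last_eq p le_sup_left
    (sup_le (head_le_last p) (hlast ▸ head_le_last q))
  rw [← hr₀] at ha hb
  have hpr : p.length = (r.cons _ ha).length := ih' le_rfl rfl (by rw [RelSeries.last_cons, hr])
  have hrq : (r.cons _ hb).length = q.length :=
    ih' (by rw [hpr, RelSeries.cons_length, RelSeries.cons_length]) rfl
      (by rw [RelSeries.last_cons, hr, hlast])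
  rw [RelSeries.cons_length] at hpr hrq
  omega

end Lattice

end CovBySeries

/-- Jordan–Hölder chain condition: in a semimodular lattice, any two maximal chains
between the same pair of elements have the same length. -/
theorem semimodular_jordan_holder {α : Type*} [Lattice α]
    (hsm : IsSemimodularLattice α) {m n : ℕ} (x y : α)
    (c : Fin (m + 1) → α) (d : Fin (n + 1) → α)
    (hc : IsMaximalChain c x y) (hd : IsMaximalChain d x y) : m = n := by
  have := hsm.isUpperModularLattice
  obtain ⟨hc₀, hcₘ, hc⟩ := hc
  obtain ⟨hd₀, hdₙ, hd⟩ := hd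
  exact CovBySeries.length_eq_of_head_eq_of_last_eq (p := ⟨m, c, hc⟩) (q := ⟨n, d, hd⟩)
    (hc₀.trans hd₀.symm) (hcₘ.trans hdₙ.symm)
end

section
/- Let f : ℤ_p → ℚ_p be a continuous function and write f in terms of the Mahler expansion f(x) = Σ aₙ C(x,n), where C(x,n) is the binomial coefficient polynomial. Then f is continuous if and only if aₙ → 0 in ℚ_p, and moreover ‖f‖_∞ = sup_n |aₙ|_p. -/
/-!
The content is Mahler's theorem (`PadicInt.hasSum_mahler`, `PadicInt.mahlerEquiv`),
which expands a continuous `f` in the basis `x ↦ Ring.choose x n` with the iterated forward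
differences `Δ_[1]^[n] f 0` as coefficients. It remains to identify `binomPoly` with that basis
(via the descending Pochhammer polynomial `n! • C(x, n) = x (x-1) ⋯ (x-n+1)`) and `mahlerCoeff`
with those differences (the binomial expansion of `(shift - 1)ⁿ`).
-/

open Filter

noncomputable def binomPoly (p : ℕ) [Fact p.Prime] (x : ℤ_[p]) (n : ℕ) : ℚ_[p] :=
  (∏ i ∈ Finset.range n, ((x : ℚ_[p]) - (i : ℚ_[p]))) / (n.factorial : ℚ_[p])

noncomputable def mahlerCoeff (p : ℕ) [Fact p.Prime] (f : ℤ_[p] → ℚ_[p]) (n : ℕ) : ℚ_[p] :=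
  ∑ k ∈ Finset.range (n + 1), (-1 : ℚ_[p]) ^ (n - k) * (n.choose k : ℚ_[p]) * f (k : ℤ_[p])

open PadicInt
open scoped fwdDiff Topology

instance PadicInt.isBoundedSMul_padic {p : ℕ} [Fact p.Prime] : IsBoundedSMul ℤ_[p] ℚ_[p] :=
  IsBoundedSMul.of_norm_smul_le fun r x => by
    rw [Algebra.smul_def, norm_mul]
    rfl

lemma Polynomial.descPochhammer_smeval_eq_prod_range {R : Type*} [CommRing R] (n : ℕ) (r : R) :
    (descPochhammer ℤ n).smeval r = ∏ j ∈ Finset.range n, (r - j) := by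
  rw [← descPochhammer_eval_eq_prod_range, ← descPochhammer_map (Int.castRingHom R), eval_map,
    ← eval₂_smulOneHom_eq_smeval, Subsingleton.elim RingHom.smulOneHom (Int.castRingHom R)]

variable {p : ℕ} [Fact p.Prime]

lemma binomPoly_eq_mahler (x : ℤ_[p]) (n : ℕ) : binomPoly p x n = mahler n x := by
  have hprod : ∏ i ∈ Finset.range n, (x - i) = n.factorial * Ring.choose x n := by
    rw [← nsmul_eq_mul, ← Ring.descPochhammer_eq_factorial_smul_choose,
      Polynomial.descPochhammer_smeval_eq_prod_range]
  have hfactorial : (n.factorial : ℚ_[p]) ≠ 0 := by exact_mod_cast n.factorial_ne_zero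
  rw [binomPoly, mahler_apply, div_eq_iff hfactorial, mul_comm]
  have hcast := congrArg (Coe.ringHom (p := p)) hprod
  simp only [map_prod, map_sub, map_mul, map_natCast] at hcast
  exact hcast

lemma mahlerCoeff_eq_fwdDiff_iter (f : ℤ_[p] → ℚ_[p]) :
    mahlerCoeff p f = fun n => (Δ_[1])^[n] f 0 := by
  funext n
  rw [fwdDiff_iter_eq_sum_shift, mahlerCoeff]
  refine Finset.sum_congr rfl fun k _ => ?_
  simp only [zero_add, zsmul_eq_mul, nsmul_eq_mul, mul_one]
  push_cast
  ring

lemma mahlerSeries_apply_eq_tsum_binomPoly {a : ℕ → ℚ_[p]} (ha : Tendsto a atTop (𝓝 0))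
    (x : ℤ_[p]) : mahlerSeries a x = ∑' n, a n * binomPoly p x n := by
  rw [mahlerSeries_apply ha]
  congr 1 with n
  rw [binomPoly_eq_mahler, Algebra.smul_def, mul_comm]
  rfl

/-- Mahler's theorem: for a continuous `f : ℤ_p → ℚ_p` the Mahler coefficients tend to
zero, `f` is given by its Mahler expansion `f(x) = Σ aₙ C(x,n)`, and
`‖f‖_∞ = sup_n |aₙ|_p`.  Conversely, if the coefficients of a Mahler series tend to
zero, then its sum is continuous. -/
theorem mahler_expansion (p : ℕ) [Fact p.Prime] (f : ℤ_[p] → ℚ_[p])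
    (hf : Continuous f) :
    Tendsto (mahlerCoeff p f) atTop (nhds 0) ∧
    (∀ x : ℤ_[p], f x = ∑' n : ℕ, mahlerCoeff p f n * binomPoly p x n) ∧
    ((⨆ x : ℤ_[p], ‖f x‖) = ⨆ n : ℕ, ‖mahlerCoeff p f n‖) ∧
    (∀ a : ℕ → ℚ_[p], Tendsto a atTop (nhds 0) →
      Continuous fun x : ℤ_[p] => ∑' n : ℕ, a n * binomPoly p x n) := by
  set F : C(ℤ_[p], ℚ_[p]) := ⟨f, hf⟩
  have hcoeff : mahlerCoeff p f = mahlerEquiv ℚ_[p] F := mahlerCoeff_eq_fwdDiff_iter f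
  have htendsto : Tendsto (mahlerCoeff p f) atTop (𝓝 0) := hcoeff ▸ fwdDiff_tendsto_zero F
  refine ⟨htendsto, fun x => ?_, ?_, fun a ha => ?_⟩
  · rw [← mahlerSeries_apply_eq_tsum_binomPoly htendsto, hcoeff, mahlerEquiv_apply, mahlerSeries,
      (hasSum_mahler F).tsum_eq]
    rfl
  · calc (⨆ x, ‖f x‖) = ‖F‖ := F.norm_eq_iSup_norm.symm
      _ = ‖mahlerEquiv ℚ_[p] F‖ := ((mahlerEquiv ℚ_[p]).norm_map F).symm
      _ = ⨆ n, ‖mahlerCoeff p f n‖ := by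
        rw [← ZeroAtInftyContinuousMap.norm_toBCF_eq_norm,
          BoundedContinuousFunction.norm_eq_iSup_norm, hcoeff]
        rfl
  · simpa only [← mahlerSeries_apply_eq_tsum_binomPoly ha] using (mahlerSeries a).continuous
end

section
/- For the first-order ODE y' = f(x,y) with f continuous, the set of values y(x₁) attained at a fixed x₁ by solutions of the initial value problem y(x₀) = y₀ defined on [x₀, x₁] is a compact interval (the Kneser theorem on the funnel section). -/
/-!
A solution of `y' = f(x, y)` with `|f| ≤ M` is `M`-Lipschitz, so by Arzelà–Ascoli and the
integral form of the equation, solutions of `y' = gₙ(x, y)` with `gₙ → f` locally uniformly have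
a subsequence converging to a solution of `y' = f(x, y)`. For the Lipschitz inf-convolutions `gₙ`
of `f`, which Picard–Lindelöf solves, this is Peano's theorem with the value prescribed at any
point of `[x₀, x₁]`; for `gₙ = f` it shows that the funnel section is closed, hence compact.
It is an interval: if `u, w` start at `y₀` and `u x₁ ≤ c ≤ w x₁`, a solution `z` with `z x₁ = c`
meets `u` or `w` by the intermediate value theorem, and switching to `z` there ends at `c`.
-/

open Set Filter Topology Function NNReal BoundedContinuousFunction

theorem TendstoLocallyUniformly.comp_tendsto {ι ι' α β : Type*} [TopologicalSpace α]
    [UniformSpace β] {F : ι → α → β} {f : α → β} {p : Filter ι} {p' : Filter ι'}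
    (h : TendstoLocallyUniformly F f p) {φ : ι' → ι} (hφ : Tendsto φ p' p) :
    TendstoLocallyUniformly (fun i => F (φ i)) f p' := fun u hu x =>
  let ⟨t, ht, hev⟩ := h u hu x
  ⟨t, ht, hφ.eventually hev⟩

section InfConvDist

variable {α : Type*} [PseudoMetricSpace α] {F : α → ℝ} {m : ℝ}

/-- For `F` bounded below, the largest `c`-Lipschitz minorant of `F`. -/
noncomputable def infConvDist (F : α → ℝ) (c : ℝ≥0) (p : α) : ℝ :=
  ⨅ q, F q + c * dist p q

theorem bddBelow_range_add_mul_dist (hm : ∀ q, m ≤ F q) (c : ℝ≥0) (p : α) :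
    BddBelow (range fun q => F q + c * dist p q) := by
  refine ⟨m, ?_⟩
  rintro _ ⟨q, rfl⟩
  have := hm q
  have : 0 ≤ (c : ℝ) * dist p q := by positivity
  linarith

theorem infConvDist_le_add (hm : ∀ q, m ≤ F q) (c : ℝ≥0) (p q : α) :
    infConvDist F c p ≤ F q + c * dist p q :=
  ciInf_le (bddBelow_range_add_mul_dist hm c p) q

theorem infConvDist_le (hm : ∀ q, m ≤ F q) (c : ℝ≥0) (p : α) : infConvDist F c p ≤ F p := by
  simpa using infConvDist_le_add hm c p p

variable [Nonempty α]

theorem monotone_infConvDist (hm : ∀ q, m ≤ F q) : Monotone (infConvDist F) :=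
  fun c c' hc p => le_ciInf fun q =>
    (infConvDist_le_add hm c p q).trans (by gcongr)

theorem le_infConvDist (hm : ∀ q, m ≤ F q) (c : ℝ≥0) (p : α) : m ≤ infConvDist F c p :=
  le_ciInf fun q => by
    have := hm q
    have : 0 ≤ (c : ℝ) * dist p q := by positivity
    linarith

theorem lipschitzWith_infConvDist (hm : ∀ q, m ≤ F q) (c : ℝ≥0) :
    LipschitzWith c (infConvDist F c) := by
  refine LipschitzWith.of_le_add_mul c fun p p' => ?_
  rw [← sub_le_iff_le_add]
  refine le_ciInf fun q => ?_
  have := infConvDist_le_add hm c p q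
  have : (c : ℝ) * dist p q ≤ c * (dist p p' + dist p' q) := by
    gcongr; exact dist_triangle p p' q
  linarith [mul_add (c : ℝ) (dist p p') (dist p' q)]

theorem tendsto_infConvDist (hF : Continuous F) (hm : ∀ q, m ≤ F q) (p : α) :
    Tendsto (fun n : ℕ => infConvDist F n p) atTop (𝓝 (F p)) := by
  refine tendsto_order.2 ⟨fun a ha => ?_, fun a ha =>
    Eventually.of_forall fun n => (infConvDist_le hm n p).trans_lt ha⟩
  set ε := (F p - a) / 2 with hε
  obtain ⟨δ, hδ, hFδ⟩ := Metric.continuousAt_iff.1 hF.continuousAt ε (by positivity)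
  filter_upwards [eventually_ge_atTop ⌈(F p - m) / δ⌉₊] with n hn
  -- far from `p` the penalty `n * dist` outweighs the drop of `F` below `F p`
  have hfar : F p - m ≤ n * δ := by
    rw [← div_le_iff₀ hδ]; exact (Nat.le_ceil _).trans (by exact_mod_cast hn)
  have hinf : F p - ε ≤ infConvDist F n p := le_ciInf fun q => by
    push_cast
    have := hm q
    rcases lt_or_ge (dist p q) δ with hq | hq
    · have := (abs_lt.1 (hFδ (dist_comm p q ▸ hq))).1
      have : (0 : ℝ) ≤ n * dist p q := by positivity
      linarith
    · have : (n : ℝ) * δ ≤ n * dist p q := by gcongr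
      linarith
  linarith

theorem tendstoLocallyUniformly_infConvDist (hF : Continuous F) (hm : ∀ q, m ≤ F q) :
    TendstoLocallyUniformly (fun n : ℕ => infConvDist F n) F atTop :=
  Monotone.tendstoLocallyUniformly_of_forall_tendsto
    (fun n => (lipschitzWith_infConvDist hm n).continuous)
    (fun _ _ h => monotone_infConvDist hm (by exact_mod_cast h)) hF (tendsto_infConvDist hF hm)

end InfConvDist

section IntegralCurve

variable {E : Type*} [NormedAddCommGroup E] [NormedSpace ℝ E] {v : ℝ → E → E}
  {γ γ' u w : ℝ → E} {s : Set ℝ} {a b c : ℝ}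

theorem IsIntegralCurveOn.congr (hγ : IsIntegralCurveOn γ v s) (h : EqOn γ' γ s) :
    IsIntegralCurveOn γ' v s := fun t ht => by
  simpa only [h ht] using (hγ t ht).congr h (h ht)

theorem IsIntegralCurveOn.Icc_union_Icc (h₁ : IsIntegralCurveOn γ v (Icc a c))
    (h₂ : IsIntegralCurveOn γ v (Icc c b)) (hac : a ≤ c) (hcb : c ≤ b) :
    IsIntegralCurveOn γ v (Icc a b) := by
  intro x hx
  have within : ∀ s, IsClosed s → IsIntegralCurveOn γ v s →
      HasDerivWithinAt γ (v x (γ x)) s x := by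
    intro s hs h
    by_cases hxs : x ∈ s
    · exact h x hxs
    · exact HasFDerivWithinAt.of_notMem_closure (by rwa [hs.closure_eq])
  rw [← Icc_union_Icc_eq_Icc hac hcb]
  exact (within _ isClosed_Icc h₁).union (within _ isClosed_Icc h₂)

theorem IsIntegralCurveOn.ite_le (hu : IsIntegralCurveOn u v (Icc a b))
    (hw : IsIntegralCurveOn w v (Icc a b)) (hc : c ∈ Icc a b) (huw : u c = w c) :
    IsIntegralCurveOn (fun t => if t ≤ c then u t else w t) v (Icc a b) := by
  refine IsIntegralCurveOn.Icc_union_Icc ?_ ?_ hc.1 hc.2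
  · exact (hu.mono (Icc_subset_Icc le_rfl hc.2)).congr fun t ht => if_pos ht.2
  · refine (hw.mono (Icc_subset_Icc hc.1 le_rfl)).congr fun t ht => ?_
    split_ifs with htc
    · rw [le_antisymm htc ht.1, huw]
    · rfl

theorem IsIntegralCurveOn.dist_le {M s t : ℝ} (hγ : IsIntegralCurveOn γ v (Icc a b))
    (hM : ∀ t x, ‖v t x‖ ≤ M) (hs : s ∈ Icc a b) (ht : t ∈ Icc a b) :
    dist (γ s) (γ t) ≤ M * dist s t := by
  simpa only [dist_eq_norm] using
    (convex_Icc a b).norm_image_sub_le_of_norm_hasDerivWithin_le hγ (fun x _ => hM x (γ x)) ht hs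

end IntegralCurve

section

variable {E : Type*} [NormedAddCommGroup E] [NormedSpace ℝ E] [CompleteSpace E]
  {g : ℝ → E → E} {γ : ℝ → E} {a b x : ℝ}

theorem IsIntegralCurveOn.eq_add_integral (hg : Continuous (uncurry g))
    (hγ : IsIntegralCurveOn γ g (Icc a b)) (hx : x ∈ Icc a b) :
    γ x = γ a + ∫ t in a..x, g t (γ t) := by
  have hsub : Icc a x ⊆ Icc a b := Icc_subset_Icc le_rfl hx.2
  rw [intervalIntegral.integral_eq_sub_of_hasDeriv_right_of_le hx.1 (hγ.continuousOn.mono hsub)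
    (fun t ht => ((hγ t (hsub (Ioo_subset_Icc_self ht))).hasDerivAt
      (Icc_mem_nhds ht.1 (ht.2.trans_le hx.2))).hasDerivWithinAt)
    ((hg.comp_continuousOn (continuousOn_id.prodMk (hγ.continuousOn.mono hsub)))
      |>.intervalIntegrable_of_Icc hx.1)]
  abel

theorem isIntegralCurveOn_of_eq_add_integral (hg : Continuous (uncurry g)) (hγ : Continuous γ)
    (h : ∀ x ∈ Icc a b, γ x = γ a + ∫ t in a..x, g t (γ t)) :
    IsIntegralCurveOn γ g (Icc a b) := by
  intro x hx
  have hgγ : Continuous fun t => g t (γ t) := hg.comp (continuous_id.prodMk hγ)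
  have hderiv : HasDerivAt (fun u => γ a + ∫ t in a..u, g t (γ t)) (g x (γ x)) x :=
    (intervalIntegral.integral_hasDerivAt_right (hgγ.intervalIntegrable a x)
      (hgγ.stronglyMeasurableAtFilter _ _) hgγ.continuousAt).const_add _
  exact hderiv.hasDerivWithinAt.congr h (h x hx)

theorem exists_isIntegralCurveOn_Icc_of_lipschitzWith {K : ℝ≥0} {L t₀ : ℝ}
    (hg : Continuous (uncurry g)) (hlip : ∀ t, LipschitzWith K (g t))
    (hL : ∀ t x, ‖g t x‖ ≤ L) (ht₀ : t₀ ∈ Icc a b) (x₀ : E) :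
    ∃ γ : ℝ → E, γ t₀ = x₀ ∧ IsIntegralCurveOn γ g (Icc a b) := by
  have hPL : IsPicardLindelof g ⟨t₀, ht₀⟩ x₀ (L.toNNReal * (b - a).toNNReal) 0 L.toNNReal K :=
    { lipschitzOnWith := fun t _ => (hlip t).lipschitzOnWith
      continuousOn := fun x _ => (hg.comp (continuous_id.prodMk continuous_const)).continuousOn
      norm_le := fun t _ x _ => (hL t x).trans (Real.le_coe_toNNReal L)
      mul_max_le := by
        simp only [NNReal.coe_mul, NNReal.coe_zero, sub_zero]
        gcongr
        exact max_le (le_trans (by linarith [ht₀.1]) (Real.le_coe_toNNReal _))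
          (le_trans (by linarith [ht₀.2]) (Real.le_coe_toNNReal _)) }
  exact hPL.exists_eq_forall_mem_Icc_hasDerivWithinAt₀

end

theorem exists_isIntegralCurveOn_of_zero_mem_uIcc_sub {v : ℝ → ℝ → ℝ} {u w : ℝ → ℝ} {a b : ℝ}
    (hu : IsIntegralCurveOn u v (Icc a b)) (hw : IsIntegralCurveOn w v (Icc a b)) (hab : a ≤ b)
    (h0 : (0 : ℝ) ∈ uIcc (u a - w a) (u b - w b)) :
    ∃ γ : ℝ → ℝ, IsIntegralCurveOn γ v (Icc a b) ∧ γ a = u a ∧ γ b = w b := by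
  have hcont : ContinuousOn (fun t => u t - w t) (uIcc a b) := by
    rw [uIcc_of_le hab]; exact hu.continuousOn.sub hw.continuousOn
  obtain ⟨c, hc, hc0⟩ := intermediate_value_uIcc hcont h0
  rw [uIcc_of_le hab] at hc
  refine ⟨_, hu.ite_le hw hc (sub_eq_zero.1 hc0), if_pos hc.1, ?_⟩
  split_ifs with hbc
  · rw [← le_antisymm hc.2 hbc]; exact sub_eq_zero.1 hc0
  · rfl

theorem exists_subseq_tendsto_of_dist_le {y : ℕ → ℝ → ℝ} {K : Set ℝ} {M a b : ℝ}
    (hK : IsCompact K) (hab : a ≤ b) (hyK : ∀ n, MapsTo (y n) (Icc a b) K)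
    (hy : ∀ n, ∀ s ∈ Icc a b, ∀ t ∈ Icc a b, dist (y n s) (y n t) ≤ M * dist s t) :
    ∃ Y : ℝ → ℝ, Continuous Y ∧ ∃ φ : ℕ → ℕ, StrictMono φ ∧
      ∀ t ∈ Icc a b, Tendsto (fun k => y (φ k) t) atTop (𝓝 (Y t)) := by
  let F : ℕ → Icc a b →ᵇ ℝ := fun n => .mkOfCompact
    ⟨(Icc a b).domRestrict (y n), (LipschitzOnWith.of_dist_le' (hy n)).continuousOn.domRestrict⟩
  have hequi : Equicontinuous fun G : range F => ⇑(G : Icc a b →ᵇ ℝ) := by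
    refine Metric.equicontinuous_of_continuity_modulus (fun d => M * d)
      (by simpa using (continuous_const_mul M).tendsto 0) _ ?_
    rintro s t ⟨_, n, rfl⟩
    exact hy n s s.2 t t.2
  have hcpt := BoundedContinuousFunction.arzela_ascoli K hK (range F)
    (by rintro _ t ⟨n, rfl⟩; exact hyK n t.2) hequi
  obtain ⟨G, -, φ, hφ, hFG⟩ := hcpt.tendsto_subseq fun n => subset_closure (mem_range_self n)
  refine ⟨G ∘ projIcc a b hab, G.continuous.comp continuous_projIcc, φ, hφ, fun t ht => ?_⟩
  have hGt : (G ∘ projIcc a b hab) t = G ⟨t, ht⟩ := by simp [projIcc_of_mem hab ht]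
  rw [hGt]
  exact ((continuous_eval_const (⟨t, ht⟩ : Icc a b)).tendsto G).comp hFG

theorem tendsto_integral_comp_of_tendstoLocallyUniformly {f : ℝ → ℝ → ℝ}
    {g : ℕ → ℝ → ℝ → ℝ} {y : ℕ → ℝ → ℝ} {Y : ℝ → ℝ} {M a b x : ℝ}
    (hgc : ∀ n, Continuous (uncurry (g n))) (hgM : ∀ n t z, |g n t z| ≤ M)
    (hgf : TendstoLocallyUniformly (fun n => uncurry (g n)) (uncurry f) atTop)
    (hyc : ∀ n, ContinuousOn (y n) (Icc a b))
    (hyY : ∀ t ∈ Icc a b, Tendsto (fun n => y n t) atTop (𝓝 (Y t))) (hx : x ∈ Icc a b) :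
    Tendsto (fun n => ∫ t in a..x, g n t (y n t)) atTop (𝓝 (∫ t in a..x, f t (Y t))) := by
  have hf : Continuous (uncurry f) := hgf.continuous (Frequently.of_forall hgc)
  have hsub : uIoc a x ⊆ Icc a b := by
    rw [uIoc_of_le hx.1]; exact fun t ht => ⟨ht.1.le, ht.2.trans hx.2⟩
  refine intervalIntegral.tendsto_integral_filter_of_dominated_convergence (fun _ => M)
    (Eventually.of_forall fun n => ?_) (Eventually.of_forall fun n => ?_)
    intervalIntegrable_const (MeasureTheory.ae_of_all _ fun t ht => ?_)
  · exact (((hgc n).comp_continuousOn (continuousOn_id.prodMk (hyc n))).mono hsub)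
      |>.aestronglyMeasurable measurableSet_uIoc
  · exact MeasureTheory.ae_of_all _ fun t _ => (Real.norm_eq_abs _).trans_le (hgM n t (y n t))
  · exact hgf.tendsto_comp hf.continuousAt (tendsto_const_nhds.prodMk_nhds (hyY t (hsub ht)))

theorem exists_subseq_tendsto_isIntegralCurveOn {f : ℝ → ℝ → ℝ} {g : ℕ → ℝ → ℝ → ℝ}
    {y : ℕ → ℝ → ℝ} {M a b t₀ y₀ : ℝ}
    (hgc : ∀ n, Continuous (uncurry (g n))) (hgM : ∀ n t z, |g n t z| ≤ M)
    (hgf : TendstoLocallyUniformly (fun n => uncurry (g n)) (uncurry f) atTop)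
    (hy : ∀ n, IsIntegralCurveOn (y n) (g n) (Icc a b)) (ht₀ : t₀ ∈ Icc a b)
    (hy₀ : ∀ n, y n t₀ = y₀) :
    ∃ Y : ℝ → ℝ, Y t₀ = y₀ ∧ IsIntegralCurveOn Y f (Icc a b) ∧ ∃ φ : ℕ → ℕ, StrictMono φ ∧
      ∀ t ∈ Icc a b, Tendsto (fun k => y (φ k) t) atTop (𝓝 (Y t)) := by
  have hab : a ≤ b := ht₀.1.trans ht₀.2
  have hgM' : ∀ n t z, ‖g n t z‖ ≤ M := by simpa only [Real.norm_eq_abs] using hgM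
  have hM : 0 ≤ M := (abs_nonneg _).trans (hgM 0 a 0)
  have hyK : ∀ n, MapsTo (y n) (Icc a b) (Metric.closedBall y₀ (M * (b - a))) := by
    intro n t ht
    rw [Metric.mem_closedBall, ← hy₀ n]
    exact ((hy n).dist_le (hgM' n) ht ht₀).trans (by gcongr; exact Real.dist_le_of_mem_Icc ht ht₀)
  obtain ⟨Y, hYc, φ, hφ, hyY⟩ := exists_subseq_tendsto_of_dist_le (isCompact_closedBall _ _) hab
    hyK fun n s hs t ht => (hy n).dist_le (hgM' n) hs ht
  have hYeq : ∀ x ∈ Icc a b, Y x = Y a + ∫ t in a..x, f t (Y t) := by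
    intro x hx
    have hyx : (fun k => y (φ k) x) = fun k => y (φ k) a + ∫ t in a..x, g (φ k) t (y (φ k) t) :=
      funext fun k => (hy (φ k)).eq_add_integral (hgc (φ k)) hx
    refine tendsto_nhds_unique (hyY x hx) ?_
    rw [hyx]
    exact (hyY a ⟨le_rfl, hab⟩).add <| tendsto_integral_comp_of_tendstoLocallyUniformly
      (fun k => hgc (φ k)) (fun k => hgM (φ k)) (hgf.comp_tendsto hφ.tendsto_atTop)
      (fun k => (hy (φ k)).continuousOn) hyY hx
  have hYt₀ : Y t₀ = y₀ :=
    tendsto_nhds_unique (hyY t₀ ht₀) (by simp only [hy₀]; exact tendsto_const_nhds)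
  exact ⟨Y, hYt₀, isIntegralCurveOn_of_eq_add_integral (hgf.continuous (Frequently.of_forall hgc))
    hYc hYeq, φ, hφ, hyY⟩

theorem exists_isIntegralCurveOn_of_continuous {f : ℝ → ℝ → ℝ} {M a b t₀ : ℝ}
    (hf : Continuous (uncurry f)) (hM : ∀ t z, |f t z| ≤ M) (ht₀ : t₀ ∈ Icc a b) (y₀ : ℝ) :
    ∃ y : ℝ → ℝ, y t₀ = y₀ ∧ IsIntegralCurveOn y f (Icc a b) := by
  have hm : ∀ p : ℝ × ℝ, -M ≤ uncurry f p := fun p => neg_le_of_abs_le (hM p.1 p.2)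
  let g : ℕ → ℝ → ℝ → ℝ := fun n => curry (infConvDist (uncurry f) n)
  have hgc : ∀ n, Continuous (uncurry (g n)) := fun n =>
    (lipschitzWith_infConvDist hm n).continuous
  have hgM : ∀ n t z, |g n t z| ≤ M := fun n t z =>
    abs_le.2 ⟨le_infConvDist hm _ _, (infConvDist_le hm _ _).trans (le_of_abs_le (hM t z))⟩
  have hsol : ∀ n, ∃ y : ℝ → ℝ, y t₀ = y₀ ∧ IsIntegralCurveOn y (g n) (Icc a b) := fun n =>
    exists_isIntegralCurveOn_Icc_of_lipschitzWith (hgc n)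
      (fun t => (lipschitzWith_infConvDist hm n).comp (LipschitzWith.prodMk_left t))
      (fun t z => (Real.norm_eq_abs _).trans_le (hgM n t z)) ht₀ y₀
  choose y hy₀ hy using hsol
  obtain ⟨Y, hYt₀, hY, -⟩ := exists_subseq_tendsto_isIntegralCurveOn hgc hgM
    (tendstoLocallyUniformly_infConvDist hf hm) hy ht₀ hy₀
  exact ⟨Y, hYt₀, hY⟩

def funnelSection (f : ℝ → ℝ → ℝ) (x₀ x₁ y₀ : ℝ) : Set ℝ :=
  {c | ∃ y : ℝ → ℝ, y x₀ = y₀ ∧ IsIntegralCurveOn y f (Icc x₀ x₁) ∧ y x₁ = c}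

section FunnelSection

variable {f : ℝ → ℝ → ℝ} {M x₀ x₁ y₀ : ℝ}

theorem funnelSection_nonempty (hf : Continuous (uncurry f)) (hM : ∀ t z, |f t z| ≤ M)
    (hx : x₀ ≤ x₁) : (funnelSection f x₀ x₁ y₀).Nonempty :=
  let ⟨y, hy₀, hy⟩ := exists_isIntegralCurveOn_of_continuous hf hM ⟨le_rfl, hx⟩ y₀
  ⟨_, y, hy₀, hy, rfl⟩

theorem funnelSection_subset_closedBall (hM : ∀ t z, |f t z| ≤ M) (hx : x₀ ≤ x₁) :
    funnelSection f x₀ x₁ y₀ ⊆ Metric.closedBall y₀ (M * (x₁ - x₀)) := by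
  rintro _ ⟨y, hy₀, hy, rfl⟩
  rw [Metric.mem_closedBall, ← hy₀, ← abs_of_nonneg (sub_nonneg.2 hx), ← Real.dist_eq]
  exact hy.dist_le (fun t z => (Real.norm_eq_abs _).trans_le (hM t z)) ⟨hx, le_rfl⟩ ⟨le_rfl, hx⟩

theorem isClosed_funnelSection (hf : Continuous (uncurry f)) (hM : ∀ t z, |f t z| ≤ M)
    (hx : x₀ ≤ x₁) : IsClosed (funnelSection f x₀ x₁ y₀) := by
  refine IsSeqClosed.isClosed fun c c' hc hcc' => ?_
  choose y hy₀ hy hyc using hc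
  have hconst : TendstoLocallyUniformly (fun _ : ℕ => uncurry f) (uncurry f) atTop :=
    fun _ hu _ => ⟨univ, univ_mem, Eventually.of_forall fun _ _ _ => refl_mem_uniformity hu⟩
  obtain ⟨Y, hY₀, hY, φ, hφ, hyY⟩ := exists_subseq_tendsto_isIntegralCurveOn (fun _ => hf)
    (fun _ => hM) hconst hy ⟨le_rfl, hx⟩ hy₀
  refine ⟨Y, hY₀, hY, tendsto_nhds_unique (hyY x₁ ⟨hx, le_rfl⟩) ?_⟩
  exact (hcc'.comp hφ.tendsto_atTop).congr fun k => (hyc (φ k)).symm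

theorem isCompact_funnelSection (hf : Continuous (uncurry f)) (hM : ∀ t z, |f t z| ≤ M)
    (hx : x₀ ≤ x₁) : IsCompact (funnelSection f x₀ x₁ y₀) :=
  (isCompact_closedBall _ _).of_isClosed_subset (isClosed_funnelSection hf hM hx)
    (funnelSection_subset_closedBall hM hx)

theorem ordConnected_funnelSection (hf : Continuous (uncurry f)) (hM : ∀ t z, |f t z| ≤ M)
    (hx : x₀ ≤ x₁) : (funnelSection f x₀ x₁ y₀).OrdConnected := by
  refine ⟨?_⟩
  rintro _ ⟨u, hu₀, hu, rfl⟩ _ ⟨w, hw₀, hw, rfl⟩ c hc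
  obtain ⟨z, hz₁, hz⟩ := exists_isIntegralCurveOn_of_continuous hf hM ⟨hx, le_rfl⟩ c
  rcases le_total (z x₀) y₀ with hz₀ | hz₀
  · obtain ⟨γ, hγ, hγ₀, hγ₁⟩ := exists_isIntegralCurveOn_of_zero_mem_uIcc_sub hu hz hx
      (mem_uIcc.2 (Or.inr ⟨by linarith [hc.1], by linarith⟩))
    exact ⟨γ, hγ₀.trans hu₀, hγ, hγ₁.trans hz₁⟩
  · obtain ⟨γ, hγ, hγ₀, hγ₁⟩ := exists_isIntegralCurveOn_of_zero_mem_uIcc_sub hw hz hx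
      (mem_uIcc.2 (Or.inl ⟨by linarith, by linarith [hc.2]⟩))
    exact ⟨γ, hγ₀.trans hw₀, hγ, hγ₁.trans hz₁⟩

end FunnelSection

/-- Kneser's theorem on the funnel section: for `y' = f(x,y)` with `f` continuous and
bounded, the set of values `y x₁` attained by solutions of the initial value problem
`y x₀ = y₀` on `[x₀, x₁]` is a compact interval. -/
theorem kneser_funnel_section (f : ℝ → ℝ → ℝ)
    (hcont : Continuous fun p : ℝ × ℝ => f p.1 p.2)
    (hbdd : ∃ M, ∀ x y, |f x y| ≤ M)
    (x₀ x₁ y₀ : ℝ) (hx : x₀ < x₁) :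
    ∃ a b : ℝ, a ≤ b ∧
      {c : ℝ | ∃ y : ℝ → ℝ, y x₀ = y₀ ∧
        (∀ x ∈ Icc x₀ x₁, HasDerivWithinAt y (f x (y x)) (Icc x₀ x₁) x) ∧
        y x₁ = c} = Icc a b := by
  obtain ⟨M, hM⟩ := hbdd
  have hne := funnelSection_nonempty (y₀ := y₀) hcont hM hx.le
  have hS := eq_Icc_of_connected_compact
    ⟨hne, (ordConnected_funnelSection hcont hM hx.le).isPreconnected⟩
    (isCompact_funnelSection hcont hM hx.le)
  exact ⟨_, _, nonempty_Icc.1 (hS ▸ hne), hS⟩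
end

section
/- Let u be a subharmonic function on an open set Ω ⊆ ℝⁿ and x₀ ∈ Ω. If E ⊆ Ω is a set that is non-thin at x₀, then limsup_{x→x₀, x∈E\{x₀}} u(x) ≥ u(x₀). -/
open Filter

/-- A subharmonic function on an open set `Ω ⊆ ℝⁿ`: upper semicontinuous, and
at every point its value is at most the average over small closed balls. -/
def SubharmonicOn {n : ℕ} (u : EuclideanSpace ℝ (Fin n) → ℝ)
    (Ω : Set (EuclideanSpace ℝ (Fin n))) : Prop :=
  UpperSemicontinuousOn u Ω ∧
    ∀ x ∈ Ω, ∀ r > (0 : ℝ), Metric.closedBall x r ⊆ Ω →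
      u x ≤ ⨍ y in Metric.closedBall x r, u y

/-- A superharmonic function on an open set `Ω ⊆ ℝⁿ`. -/
def SuperharmonicOn {n : ℕ} (v : EuclideanSpace ℝ (Fin n) → ℝ)
    (Ω : Set (EuclideanSpace ℝ (Fin n))) : Prop :=
  LowerSemicontinuousOn v Ω ∧
    ∀ x ∈ Ω, ∀ r > (0 : ℝ), Metric.closedBall x r ⊆ Ω →
      (⨍ y in Metric.closedBall x r, v y) ≤ v x

/-- A set `E` is thin ('effilé') at `x₀` if either `x₀` is not an accumulation point of
`E`, or there is a superharmonic function `v` on a neighbourhood of `x₀` with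
`liminf_{x → x₀, x ∈ E \ {x₀}} v x > v x₀`. -/
def ThinAt {n : ℕ} (E : Set (EuclideanSpace ℝ (Fin n)))
    (x₀ : EuclideanSpace ℝ (Fin n)) : Prop :=
  x₀ ∉ closure (E \ {x₀}) ∨
    ∃ (U : Set (EuclideanSpace ℝ (Fin n))) (v : EuclideanSpace ℝ (Fin n) → ℝ),
      IsOpen U ∧ x₀ ∈ U ∧ SuperharmonicOn v U ∧
        v x₀ < liminf v (nhdsWithin x₀ (E \ {x₀}))

lemma my_liminf_neg {α : Type*} (f : Filter α) (u : α → ℝ) :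
    liminf (-u) f = - limsup u f := by
  rw [liminf_eq, limsup_eq, Real.sInf_def, neg_neg]
  congr 1
  ext a
  simp only [Set.mem_neg, Set.mem_setOf_eq, Pi.neg_apply, le_neg]

/-- If `u` is subharmonic on `Ω`, `x₀ ∈ Ω` and `E ⊆ Ω` is non-thin at `x₀`, then
`limsup_{x → x₀, x ∈ E \ {x₀}} u x ≥ u x₀`. -/
theorem subharmonic_limsup_ge_of_not_thin {n : ℕ}
    (Ω E : Set (EuclideanSpace ℝ (Fin n))) (hΩ : IsOpen Ω)
    (u : EuclideanSpace ℝ (Fin n) → ℝ) (hu : SubharmonicOn u Ω)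
    (x₀ : EuclideanSpace ℝ (Fin n)) (hx₀ : x₀ ∈ Ω) (hE : E ⊆ Ω)
    (hthin : ¬ ThinAt E x₀) :
    u x₀ ≤ limsup u (nhdsWithin x₀ (E \ {x₀})) := by
  rw [ThinAt, not_or] at hthin
  obtain ⟨-, h2⟩ := hthin
  push_neg at h2
  have hsuper : SuperharmonicOn (-u) Ω := by
    constructor
    · intro x hx y hy
      have := hu.1 x hx (-y) (by simpa using neg_lt_neg hy)
      filter_upwards [this] with z hz
      simpa using neg_lt_neg hz
    · intro x hx r hr hball
      have := hu.2 x hx r hr hball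
      have hav : (⨍ y in Metric.closedBall x r, (-u) y) =
          -⨍ y in Metric.closedBall x r, u y := by
        simpa using MeasureTheory.average_neg (μ := MeasureTheory.volume.restrict
          (Metric.closedBall x r)) u
      rw [hav]
      simpa using neg_le_neg this
  have := h2 Ω (-u) hΩ hx₀ hsuper
  rw [my_liminf_neg] at this
  simpa using this
end
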